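/- Let A be a differential ring, X = Spec^Δ A, O' the residue-field structure sheaf on X, and D any differential subring of O'(X) containing the image of the canonical map ι' : A → O'(X). Then the contraction map ι'* : Spec^Δ D → Spec^Δ A is a homeomorphism. -/

import Mathlib

/-!
A point `p` of `X = Spec^Δ A` gives the evaluation `D → K(p)`, whose kernel is a prime
differential ideal of `D`; conversely a prime differential ideal `Q` of `D` contracts to a point
`p` of `X`. These are mutually inverse because every `f ∈ D` is a global fraction around any
point: shrinking a neighbourhood on which `f = a/b` to a basic open set `{c ∉ ·}` and replacing
`a, b` by `c a, c b` gives `f · ι(b) = ι(a)` in `D` with `b ∉ p`, so `f ∈ Q ↔ a ∈ p ↔ f(p) = 0`.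
Continuity of the inverse is the openness of the non-vanishing locus `{p | f(p) ≠ 0}`.
-/

/-- An ideal is a differential ideal w.r.t. a family of derivation maps `d`. -/
def IsDiffIdeal {A : Type*} [CommRing A] {k : ℕ} (d : Fin k → A → A) (I : Ideal A) : Prop :=
  ∀ i : Fin k, ∀ x ∈ I, d i x ∈ I

/-- The differential spectrum: prime differential ideals, with the Kolchin topology
(the subspace topology induced from the Zariski topology on `PrimeSpectrum`). -/
abbrev DiffSpec {A : Type*} [CommRing A] {k : ℕ} (d : Fin k → A → A) :=
  {p : PrimeSpectrum A // IsDiffIdeal d p.asIdeal}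

/-- A Keigher ring: the radical of every differential ideal is differential. -/
def IsKeigher {A : Type*} [CommRing A] {k : ℕ} (d : Fin k → A → A) : Prop :=
  ∀ I : Ideal A, IsDiffIdeal d I → IsDiffIdeal d I.radical

/-- `radDiffGen d E` is the smallest radical differential ideal containing `E`. -/
def radDiffGen {A : Type*} [CommRing A] {k : ℕ} (d : Fin k → A → A) (E : Set A) : Ideal A :=
  sInf {I : Ideal A | E ⊆ I ∧ I.IsRadical ∧ IsDiffIdeal d I}

/-- The canonical map from `A` to the residue field `K(p) = Frac(A/p)`. -/
noncomputable def resMap {A : Type*} [CommRing A] {k : ℕ} {d : Fin k → A → A}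
    (p : DiffSpec d) : A →+* FractionRing (A ⧸ p.1.asIdeal) :=
  (algebraMap (A ⧸ p.1.asIdeal) (FractionRing (A ⧸ p.1.asIdeal))).comp
    (Ideal.Quotient.mk p.1.asIdeal)

/-- A function `X → ⊔_p K(p)` is regular if it is locally a quotient `a/b` with `b`
outside every prime differential ideal of the neighborhood. -/
def RegularRes {A : Type*} [CommRing A] {k : ℕ} {d : Fin k → A → A}
    (f : ∀ p : DiffSpec d, FractionRing (A ⧸ p.1.asIdeal)) : Prop :=
  ∀ p : DiffSpec d, ∃ U : Set (DiffSpec d), IsOpen U ∧ p ∈ U ∧ ∃ a b : A,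
    (∀ q ∈ U, b ∉ q.1.asIdeal) ∧ ∀ q ∈ U, f q * resMap q b = resMap q a

open PrimeSpectrum Topology

section DiffIdeal

variable {A B : Type*} [CommRing A] [CommRing B] {k : ℕ} {d : Fin k → A → A}
  {e : Fin k → B → B}

theorem IsDiffIdeal.comap (φ : A →+* B) (hφ : ∀ i a, φ (d i a) = e i (φ a)) {I : Ideal B}
    (hI : IsDiffIdeal e I) : IsDiffIdeal d (I.comap φ) := fun i a ha => by
  simpa only [Ideal.mem_comap, hφ] using hI i _ ha

theorem isDiffIdeal_bot (he : ∀ i, e i 0 = 0) : IsDiffIdeal e (⊥ : Ideal B) := by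
  intro i x hx
  rw [Ideal.mem_bot] at hx ⊢
  rw [hx, he]

def DiffSpec.comap (φ : A →+* B) (hφ : ∀ i a, φ (d i a) = e i (φ a)) :
    C(DiffSpec e, DiffSpec d) where
  toFun q := ⟨PrimeSpectrum.comap φ q.1, q.2.comap φ hφ⟩
  continuous_toFun := ((continuous_comap φ).comp continuous_subtype_val).subtype_mk _

end DiffIdeal

section ResidueFields

variable {A : Type*} [CommRing A] {k : ℕ} {d : Fin k → A → A}

theorem resMap_eq_zero_iff (p : DiffSpec d) (a : A) : resMap p a = 0 ↔ a ∈ p.1.asIdeal := by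
  simp [resMap, Ideal.Quotient.eq_zero_iff_mem]

theorem RegularRes.exists_fraction {f : ∀ p : DiffSpec d, FractionRing (A ⧸ p.1.asIdeal)}
    (hf : RegularRes f) (p : DiffSpec d) :
    ∃ a b : A, b ∉ p.1.asIdeal ∧ ∀ q, f q * resMap q b = resMap q a := by
  obtain ⟨U, hU, hpU, a, b, hb, hfU⟩ := hf p
  obtain ⟨s, hs, rfl⟩ := isOpen_induced_iff.mp hU
  obtain ⟨-, ⟨c, rfl⟩, hpc, hcs⟩ :=
    isTopologicalBasis_basic_opens.exists_subset_of_mem_open hpU hs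
  refine ⟨c * a, c * b, p.1.isPrime.mul_notMem hpc (hb p hpU), fun q => ?_⟩
  by_cases hcq : c ∈ q.1.asIdeal
  · simp [(resMap_eq_zero_iff q c).mpr hcq]
  · rw [map_mul, map_mul, mul_left_comm, hfU q (hcs hcq)]

theorem RegularRes.isOpen_setOf_ne_zero {f : ∀ p : DiffSpec d, FractionRing (A ⧸ p.1.asIdeal)}
    (hf : RegularRes f) : IsOpen {p | f p ≠ 0} := by
  refine isOpen_iff_forall_mem_open.mpr fun p hp => ?_
  obtain ⟨a, b, hb, hfr⟩ := hf.exists_fraction p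
  have hbp : resMap p b ≠ 0 := mt (resMap_eq_zero_iff p b).mp hb
  refine ⟨Subtype.val ⁻¹' basicOpen a, fun q hq hfq => ?_,
    isOpen_basicOpen.preimage continuous_subtype_val, ?_⟩
  · exact hq ((resMap_eq_zero_iff q a).mp (by rw [← hfr q, hfq, zero_mul]))
  · exact fun ha => mul_ne_zero hp hbp ((hfr p).trans ((resMap_eq_zero_iff p a).mpr ha))

end ResidueFields

section Subring

variable {A : Type*} [CommRing A] {k : ℕ} {d : Fin k → A → A}
  (D : Subring (∀ p : DiffSpec d, FractionRing (A ⧸ p.1.asIdeal)))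
  (himg : ∀ a : A, (fun p => resMap p a) ∈ D)

/-- The map `ι' : A → O'(X)`, with values in `D`. -/
noncomputable def resToSubring : A →+* D :=
  RingHom.codRestrict (RingHom.pi fun p => resMap p) D himg

def evalAt (p : DiffSpec d) : D →+* FractionRing (A ⧸ p.1.asIdeal) :=
  (Pi.evalRingHom _ p).comp D.subtype

def kerEvalAt (p : DiffSpec d) : PrimeSpectrum D :=
  ⟨RingHom.ker (evalAt D p), RingHom.ker_isPrime _⟩

theorem comap_ker_evalAt (p : DiffSpec d) :
    (RingHom.ker (evalAt D p)).comap (resToSubring D himg) = p.1.asIdeal :=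
  Ideal.ext (resMap_eq_zero_iff p)

variable {D}

theorem ker_evalAt_eq_of_comap_eq (hreg : ∀ f ∈ D, RegularRes f) {Q : Ideal D} [Q.IsPrime]
    {p : DiffSpec d} (hQp : Q.comap (resToSubring D himg) = p.1.asIdeal) :
    RingHom.ker (evalAt D p) = Q := by
  ext f
  obtain ⟨a, b, hb, hfr⟩ := (hreg f f.2).exists_fraction p
  have hfD : f * resToSubring D himg b = resToSubring D himg a := Subtype.ext (funext hfr)
  have hbQ : resToSubring D himg b ∉ Q := by rwa [← Ideal.mem_comap, hQp]
  have hbp : resMap p b ≠ 0 := mt (resMap_eq_zero_iff p b).mp hb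
  calc f ∈ RingHom.ker (evalAt D p) ↔ f.1 p * resMap p b = 0 := by
        rw [RingHom.mem_ker, mul_eq_zero, or_iff_left hbp]; rfl
    _ ↔ a ∈ p.1.asIdeal := by rw [hfr, resMap_eq_zero_iff]
    _ ↔ f * resToSubring D himg b ∈ Q := by rw [← hQp, Ideal.mem_comap, hfD]
    _ ↔ f ∈ Q := by rw [Ideal.IsPrime.mul_mem_iff_mem_or_mem ‹_›, or_iff_left hbQ]

theorem continuous_kerEvalAt (hreg : ∀ f ∈ D, RegularRes f) : Continuous (kerEvalAt D) := by
  rw [isTopologicalBasis_basic_opens.continuous_iff]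
  rintro - ⟨f, rfl⟩
  exact (hreg f f.2).isOpen_setOf_ne_zero

end Subring

section Contraction

variable {A : Type*} [CommRing A] {k : ℕ} {d : Fin k → A → A}
  {D : Subring (∀ p : DiffSpec d, FractionRing (A ⧸ p.1.asIdeal))}
  (himg : ∀ a : A, (fun p => resMap p a) ∈ D)
  {δK : ∀ p : DiffSpec d,
    Fin k → Derivation ℤ (FractionRing (A ⧸ p.1.asIdeal)) (FractionRing (A ⧸ p.1.asIdeal))}
  {dD : Fin k → D → D}
  (hι : ∀ i a, resToSubring D himg (d i a) = dD i (resToSubring D himg a))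
  (hreg : ∀ f ∈ D, RegularRes f)

theorem isDiffIdeal_ker_evalAt (hdD : ∀ i x p, (dD i x).1 p = δK p i (x.1 p))
    (p : DiffSpec d) : IsDiffIdeal dD (RingHom.ker (evalAt D p)) :=
  (isDiffIdeal_bot fun i => (δK p i).map_zero).comap (evalAt D p) fun i x => hdD i x p

noncomputable def contractionHomeomorph (hdD : ∀ i x p, (dD i x).1 p = δK p i (x.1 p)) :
    DiffSpec dD ≃ₜ DiffSpec d where
  toFun := DiffSpec.comap (resToSubring D himg) hι
  invFun p := ⟨kerEvalAt D p, isDiffIdeal_ker_evalAt hdD p⟩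
  left_inv _ := Subtype.ext (PrimeSpectrum.ext (ker_evalAt_eq_of_comap_eq himg hreg rfl))
  right_inv p := Subtype.ext (PrimeSpectrum.ext (comap_ker_evalAt D himg p))
  continuous_toFun := (DiffSpec.comap _ hι).continuous
  continuous_invFun := (continuous_kerEvalAt hreg).subtype_mk _

end Contraction

theorem stmt12_general {A : Type*} [CommRing A] {k : ℕ} (δ : Fin k → Derivation ℤ A A)
    (δK : ∀ p : DiffSpec (fun i => ⇑(δ i)),
      Fin k → Derivation ℤ (FractionRing (A ⧸ p.1.asIdeal)) (FractionRing (A ⧸ p.1.asIdeal)))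
    (hδK : ∀ (p : DiffSpec (fun i => ⇑(δ i))) (i : Fin k) (a : A), δK p i (resMap p a) = resMap p (δ i a))
    (D : Subring (∀ p : DiffSpec (fun i => ⇑(δ i)), FractionRing (A ⧸ p.1.asIdeal)))
    (hreg : ∀ f ∈ D, RegularRes f)
    (himg : ∀ a : A, (fun p : DiffSpec (fun i => ⇑(δ i)) => resMap p a) ∈ D)
    (dD : Fin k → D → D)
    (hdD : ∀ i (x : D) (p : DiffSpec (fun i => ⇑(δ i))), ((dD i x : D) : ∀ p, FractionRing (A ⧸ p.1.asIdeal)) p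
      = δK p i (((x : D) : ∀ p, FractionRing (A ⧸ p.1.asIdeal)) p)) :
    ∃ h : DiffSpec dD ≃ₜ DiffSpec (fun i => ⇑(δ i)),
      ∀ q, (h q).1.asIdeal
        = Ideal.comap (RingHom.codRestrict (Pi.ringHom fun p : DiffSpec (fun i => ⇑(δ i)) => resMap p) D himg) q.1.asIdeal := by
  have hι : ∀ i a, resToSubring D himg (δ i a) = dD i (resToSubring D himg a) := fun i a =>
    Subtype.ext (funext fun p => by rw [hdD]; exact (hδK p i a).symm)
  exact ⟨contractionHomeomorph himg hι hreg hdD, fun _ => rfl⟩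

/-- For any differential subring `D` of `O'(X)` containing the image of `ι' : A → O'(X)`,
the contraction map `Spec^Δ D → Spec^Δ A` is a homeomorphism. -/
theorem stmt12 {A : Type*} [CommRing A] {k : ℕ} (δ : Fin k → Derivation ℤ A A)
    (hcomm : ∀ i j a, δ i (δ j a) = δ j (δ i a))
    (δK : ∀ p : DiffSpec (fun i => ⇑(δ i)),
      Fin k → Derivation ℤ (FractionRing (A ⧸ p.1.asIdeal)) (FractionRing (A ⧸ p.1.asIdeal)))
    (hδK : ∀ (p : DiffSpec (fun i => ⇑(δ i))) (i : Fin k) (a : A), δK p i (resMap p a) = resMap p (δ i a))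
    (D : Subring (∀ p : DiffSpec (fun i => ⇑(δ i)), FractionRing (A ⧸ p.1.asIdeal)))
    (hreg : ∀ f ∈ D, RegularRes f)
    (himg : ∀ a : A, (fun p : DiffSpec (fun i => ⇑(δ i)) => resMap p a) ∈ D)
    (hclosed : ∀ f ∈ D, ∀ i, (fun p => δK p i (f p)) ∈ D)
    (dD : Fin k → D → D)
    (hdD : ∀ i (x : D) (p : DiffSpec (fun i => ⇑(δ i))), ((dD i x : D) : ∀ p, FractionRing (A ⧸ p.1.asIdeal)) p
      = δK p i (((x : D) : ∀ p, FractionRing (A ⧸ p.1.asIdeal)) p)) :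
    ∃ h : DiffSpec dD ≃ₜ DiffSpec (fun i => ⇑(δ i)),
      ∀ q, (h q).1.asIdeal
        = Ideal.comap (RingHom.codRestrict (Pi.ringHom fun p : DiffSpec (fun i => ⇑(δ i)) => resMap p) D himg) q.1.asIdeal :=
  stmt12_general δ δK hδK D hreg himg dD hdD
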